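/- Let {P_n} be rank-one projections on a separable complex Hilbert space and W₀ a density operator with tr(W₀ P_n) → 1. Then there exists a rank-one projection P such that ‖P_n − P‖ → 0 and W₀ = P. -/

import Mathlib

open MeasureTheory Topology Filter

/-- The rank-one operator `|φ⟩⟨φ|`. -/
noncomputable def rankOne {H : Type*} [NormedAddCommGroup H] [InnerProductSpace ℂ H]
    (φ : H) : H →L[ℂ] H := (innerSL ℂ φ).smulRight φ

/-- The set of rank-one orthogonal projections (pure states / projective Hilbert space). -/
noncomputable def projSet (H : Type*) [NormedAddCommGroup H] [InnerProductSpace ℂ H] :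
    Set (H →L[ℂ] H) := {T | ∃ φ : H, ‖φ‖ = 1 ∧ T = rankOne φ}

/-- The trace of an operator computed along a Hilbert basis. -/
noncomputable def traceAlong {H ι : Type*} [NormedAddCommGroup H] [InnerProductSpace ℂ H]
    (b : HilbertBasis ι ℂ H) (A : H →L[ℂ] H) : ℂ :=
  ∑' i, inner ℂ (b i) (A (b i))

/-- `W` is a density operator: positive, trace class, with trace one
(trace computed along the Hilbert basis `b`). -/
noncomputable def IsDensityOp {H ι : Type*} [NormedAddCommGroup H] [InnerProductSpace ℂ H]
    [CompleteSpace H] (b : HilbertBasis ι ℂ H) (W : H →L[ℂ] H) : Prop :=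
  W.IsPositive ∧ HasSum (fun i => (inner ℂ (b i) (W (b i)) : ℂ)) 1


/-!
Write `W₀ = T * T` with `T = √W₀`. The trace condition says `∑ ‖T bᵢ‖² = 1`, so by Parseval and
Bessel `∑ₖ ‖T eₖ‖² ≤ 1` for every orthonormal family `e`. Hence `‖T‖ ≤ 1` and, for a unit vector
`φ`, `‖T u‖² ≤ (1 - ‖T φ‖²) ‖u‖²` on `φ⊥`, which gives `‖W₀ - |φ⟩⟨φ|‖ ≤ 4 √(1 - ⟨φ, W₀ φ⟩)`.
As `tr (W₀ Pₙ) = ⟨φₙ, W₀ φₙ⟩ → 1`, this forces `Pₙ → W₀` in norm, so `W₀` is idempotent. A unit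
vector `ψ` in its range has `‖T ψ‖ = 1`, so `T` vanishes on `ψ⊥` and `W₀ = |ψ⟩⟨ψ|`.
-/

open scoped ComplexInnerProductSpace

section HilbertSchmidt

variable {𝕜 E ι κ : Type*} [RCLike 𝕜] [NormedAddCommGroup E] [InnerProductSpace 𝕜 E]

theorem HilbertBasis.hasSum_norm_inner_sq (b : HilbertBasis ι 𝕜 E) (x : E) :
    HasSum (fun i => ‖inner 𝕜 (b i) x‖ ^ 2) (‖x‖ ^ 2) := by
  have h := (b.hasSum_inner_mul_inner x x).mapL (RCLike.reCLM (K := 𝕜))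
  simp only [RCLike.reCLM_apply, inner_self_eq_norm_sq] at h
  refine h.congr_fun fun i => ?_
  rw [← inner_conj_symm x (b i), RCLike.conj_mul]
  norm_cast

variable [CompleteSpace E] {T : E →L[𝕜] E}

theorem norm_sq_apply_le_of_hasSum (hT : IsSelfAdjoint T) (b : HilbertBasis ι 𝕜 E) {s : ℝ}
    (hs : HasSum (fun i => ‖T (b i)‖ ^ 2) s) (x : E) : ‖T x‖ ^ 2 ≤ s * ‖x‖ ^ 2 := by
  refine hasSum_le (fun i => ?_) (b.hasSum_norm_inner_sq (T x)) (hs.mul_right _)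
  have hsymm : inner 𝕜 (T (b i)) x = inner 𝕜 (b i) (T x) := hT.isSymmetric (b i) x
  rw [← mul_pow, ← hsymm]
  gcongr
  exact norm_inner_le_norm _ _

theorem sum_norm_sq_apply_le_of_hasSum (hT : IsSelfAdjoint T) (b : HilbertBasis ι 𝕜 E) {s : ℝ}
    (hs : HasSum (fun i => ‖T (b i)‖ ^ 2) s) {v : κ → E} (hv : Orthonormal 𝕜 v)
    (t : Finset κ) : ∑ k ∈ t, ‖T (v k)‖ ^ 2 ≤ s := by
  have hsum : HasSum (fun i => ∑ k ∈ t, ‖inner 𝕜 (v k) (T (b i))‖ ^ 2)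
      (∑ k ∈ t, ‖T (v k)‖ ^ 2) := by
    refine hasSum_sum fun k _ => (b.hasSum_norm_inner_sq (T (v k))).congr_fun fun i => ?_
    have hsymm : inner 𝕜 (T (v k)) (b i) = inner 𝕜 (v k) (T (b i)) := hT.isSymmetric (v k) (b i)
    rw [← hsymm, norm_inner_symm]
  exact hasSum_le (fun i => hv.sum_inner_products_le (T (b i))) hsum hs

theorem IsSelfAdjoint.norm_sq_apply_eq_re_inner (hT : IsSelfAdjoint T) (x : E) :
    ‖T x‖ ^ 2 = RCLike.re (inner 𝕜 x ((T * T) x)) := by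
  have hsymm : inner 𝕜 (T x) (T x) = inner 𝕜 x (T (T x)) := hT.isSymmetric x (T x)
  rw [mul_apply_eq_comp, ← hsymm, inner_self_eq_norm_sq]

theorem norm_apply_le_of_hasSum_one (hT : IsSelfAdjoint T) (b : HilbertBasis ι 𝕜 E)
    (hb : HasSum (fun i => ‖T (b i)‖ ^ 2) 1) (x : E) : ‖T x‖ ≤ ‖x‖ := by
  have h := norm_sq_apply_le_of_hasSum hT b hb x
  rw [one_mul] at h
  exact (pow_le_pow_iff_left₀ (norm_nonneg _) (norm_nonneg _) two_ne_zero).mp h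

theorem norm_sq_apply_le_of_inner_eq_zero (hT : IsSelfAdjoint T) (b : HilbertBasis ι 𝕜 E)
    {s : ℝ} (hs : HasSum (fun i => ‖T (b i)‖ ^ 2) s) {φ u : E} (hφ : ‖φ‖ = 1)
    (hφu : inner 𝕜 φ u = 0) : ‖T u‖ ^ 2 ≤ (s - ‖T φ‖ ^ 2) * ‖u‖ ^ 2 := by
  rcases eq_or_ne u 0 with rfl | hu
  · simp
  set w : E := (‖u‖⁻¹ : 𝕜) • u
  have hw : ‖w‖ = 1 := norm_smul_inv_norm hu
  have hφw : inner 𝕜 φ w = 0 := by simp [w, inner_smul_right, hφu]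
  have hon : Orthonormal 𝕜 ![φ, w] := by
    rw [orthonormal_iff_ite]
    simp [Fin.forall_fin_two, inner_self_eq_norm_sq_to_K, hφ, hw, hφw, inner_eq_zero_symm.mp hφw]
  have hpair := sum_norm_sq_apply_le_of_hasSum hT b hs hon Finset.univ
  simp only [Fin.sum_univ_two, Matrix.cons_val_zero, Matrix.cons_val_one] at hpair
  have hTw : ‖T w‖ = ‖u‖⁻¹ * ‖T u‖ := by simp [w, norm_smul]
  have hnu : 0 < ‖u‖ := norm_pos_iff.mpr hu
  calc ‖T u‖ ^ 2 = ‖T w‖ ^ 2 * ‖u‖ ^ 2 := by rw [hTw]; field_simp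
    _ ≤ (s - ‖T φ‖ ^ 2) * ‖u‖ ^ 2 := by gcongr; linarith

end HilbertSchmidt

section RankOne

variable {H : Type*} [NormedAddCommGroup H] [InnerProductSpace ℂ H]

theorem rankOne_apply (φ x : H) : rankOne φ x = ⟪φ, x⟫ • φ := rfl

theorem rankOne_mul_self {φ : H} (hφ : ‖φ‖ = 1) : rankOne φ * rankOne φ = rankOne φ := by
  ext x
  simp [rankOne_apply, inner_self_eq_norm_sq_to_K, hφ]

theorem traceAlong_mul_rankOne {ι : Type*} (b : HilbertBasis ι ℂ H) (A : H →L[ℂ] H) (φ : H) :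
    traceAlong b (A * rankOne φ) = ⟪φ, A φ⟫ := by
  simp only [traceAlong, mul_apply_eq_comp, rankOne_apply, map_smul, inner_smul_right]
  exact b.tsum_inner_mul_inner φ (A φ)

end RankOne

section PureStateLimit

variable {H ι : Type*} [NormedAddCommGroup H] [InnerProductSpace ℂ H] [CompleteSpace H]
  {T : H →L[ℂ] H}

theorem sub_norm_sq_apply_nonneg (hT : IsSelfAdjoint T) (b : HilbertBasis ι ℂ H)
    (hb : HasSum (fun i => ‖T (b i)‖ ^ 2) 1) {φ : H} (hφ : ‖φ‖ = 1) : 0 ≤ 1 - ‖T φ‖ ^ 2 := by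
  have h := norm_apply_le_of_hasSum_one hT b hb φ
  rw [hφ] at h
  nlinarith [norm_nonneg (T φ)]

theorem norm_mul_self_apply_sub_self_le (hT : IsSelfAdjoint T) (b : HilbertBasis ι ℂ H)
    (hb : HasSum (fun i => ‖T (b i)‖ ^ 2) 1) {φ : H} (hφ : ‖φ‖ = 1) :
    ‖(T * T) φ - φ‖ ≤ 2 * √(1 - ‖T φ‖ ^ 2) := by
  have hT1 : ∀ x, ‖T x‖ ≤ ‖x‖ := norm_apply_le_of_hasSum_one hT b hb
  have hre : (⟪(T * T) φ, φ⟫).re = ‖T φ‖ ^ 2 := by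
    rw [← inner_conj_symm, Complex.conj_re]
    exact (hT.norm_sq_apply_eq_re_inner φ).symm
  have hTφ : ‖T φ‖ ≤ 1 := hφ ▸ hT1 φ
  have hWφ : ‖(T * T) φ‖ ≤ 1 := (hT1 _).trans hTφ
  have hsq : ‖(T * T) φ - φ‖ ^ 2 ≤ (2 * √(1 - ‖T φ‖ ^ 2)) ^ 2 := by
    rw [norm_sub_sq (𝕜 := ℂ), RCLike.re_to_complex, hre, hφ, mul_pow,
      Real.sq_sqrt (sub_norm_sq_apply_nonneg hT b hb hφ)]
    nlinarith [norm_nonneg ((T * T) φ), norm_nonneg (T φ)]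
  exact (pow_le_pow_iff_left₀ (norm_nonneg _) (by positivity) two_ne_zero).mp hsq

theorem norm_mul_self_apply_le_of_inner_eq_zero (hT : IsSelfAdjoint T) (b : HilbertBasis ι ℂ H)
    (hb : HasSum (fun i => ‖T (b i)‖ ^ 2) 1) {φ u : H} (hφ : ‖φ‖ = 1) (hφu : ⟪φ, u⟫ = 0) :
    ‖(T * T) u‖ ≤ √(1 - ‖T φ‖ ^ 2) * ‖u‖ := by
  have hsq : ‖T u‖ ^ 2 ≤ (√(1 - ‖T φ‖ ^ 2) * ‖u‖) ^ 2 := by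
    rw [mul_pow, Real.sq_sqrt (sub_norm_sq_apply_nonneg hT b hb hφ)]
    exact norm_sq_apply_le_of_inner_eq_zero hT b hb hφ hφu
  exact (norm_apply_le_of_hasSum_one hT b hb _).trans
    ((pow_le_pow_iff_left₀ (norm_nonneg _) (by positivity) two_ne_zero).mp hsq)

theorem norm_mul_self_sub_rankOne_le (hT : IsSelfAdjoint T) (b : HilbertBasis ι ℂ H)
    (hb : HasSum (fun i => ‖T (b i)‖ ^ 2) 1) {φ : H} (hφ : ‖φ‖ = 1) :
    ‖T * T - rankOne φ‖ ≤ 4 * √(1 - ‖T φ‖ ^ 2) := by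
  set ε := 1 - ‖T φ‖ ^ 2
  refine ContinuousLinearMap.opNorm_le_bound _ (by positivity) fun x => ?_
  set c := ⟪φ, x⟫
  set u := x - c • φ
  have hc : ‖c‖ ≤ ‖x‖ := (norm_inner_le_norm φ x).trans_eq (by rw [hφ, one_mul])
  have hu : ⟪φ, u⟫ = 0 := by simp [u, c, inner_self_eq_norm_sq_to_K, hφ]
  have hux : ‖u‖ ≤ 2 * ‖x‖ := by
    calc ‖u‖ ≤ ‖x‖ + ‖c • φ‖ := norm_sub_le _ _
      _ ≤ 2 * ‖x‖ := by rw [norm_smul, hφ, mul_one]; linarith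
  have happly : (T * T - rankOne φ) x = c • ((T * T) φ - φ) + (T * T) u := by
    simp only [sub_apply, rankOne_apply, u, map_sub, map_smul, smul_sub]
    abel
  calc ‖(T * T - rankOne φ) x‖ ≤ ‖c‖ * ‖(T * T) φ - φ‖ + ‖(T * T) u‖ := by
        rw [happly, ← norm_smul]; exact norm_add_le _ _
    _ ≤ ‖x‖ * (2 * √ε) + √ε * (2 * ‖x‖) :=
        add_le_add (mul_le_mul hc (norm_mul_self_apply_sub_self_le hT b hb hφ)
            (norm_nonneg _) (norm_nonneg _))
          ((norm_mul_self_apply_le_of_inner_eq_zero hT b hb hφ hu).trans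
            (mul_le_mul_of_nonneg_left hux (Real.sqrt_nonneg _)))
    _ = 4 * √ε * ‖x‖ := by ring

theorem exists_mul_self_eq_rankOne (hT : IsSelfAdjoint T) (b : HilbertBasis ι ℂ H)
    (hb : HasSum (fun i => ‖T (b i)‖ ^ 2) 1) (hidem : IsIdempotentElem (T * T)) :
    ∃ ψ : H, ‖ψ‖ = 1 ∧ T * T = rankOne ψ := by
  have hW : T * T ≠ 0 := by
    intro h
    simp only [hT.norm_sq_apply_eq_re_inner, h, zero_apply, inner_zero_right, map_zero] at hb
    exact one_ne_zero (hb.unique hasSum_zero)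
  set W := T * T
  have hWsymm : ∀ x y, ⟪W x, y⟫ = ⟪x, W y⟫ := by
    have h : IsSelfAdjoint W := by simpa only [hT.star_eq] using IsSelfAdjoint.star_mul_self T
    exact h.isSymmetric
  have hfix : ∀ y, W (W y) = W y := fun y => congr($hidem y)
  obtain ⟨x, hx⟩ : ∃ x, W x ≠ 0 := by
    by_contra! h
    exact hW (ContinuousLinearMap.ext h)
  set ψ : H := (‖W x‖⁻¹ : ℂ) • W x
  have hψ : ‖ψ‖ = 1 := norm_smul_inv_norm hx
  have hWψ : W ψ = ψ := by simp only [ψ, map_smul, hfix]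
  have hTψ : ‖T ψ‖ ^ 2 = 1 := by
    rw [hT.norm_sq_apply_eq_re_inner, hWψ, inner_self_eq_norm_sq_to_K, hψ]
    simp
  refine ⟨ψ, hψ, ContinuousLinearMap.ext fun y => ?_⟩
  set z := W y - ⟪ψ, y⟫ • ψ
  have hz : ⟪ψ, z⟫ = 0 := by simp [z, ← hWsymm, hWψ, inner_self_eq_norm_sq_to_K, hψ]
  have hTz : T z = 0 := by
    have h := norm_sq_apply_le_of_inner_eq_zero hT b hb hψ hz
    rw [hTψ, sub_self, zero_mul] at h
    exact norm_eq_zero.mp (pow_eq_zero_iff two_ne_zero |>.mp (le_antisymm h (by positivity)))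
  have hWz : W z = z := by simp only [z, map_sub, map_smul, hfix, hWψ]
  have hz0 : z = 0 := by rw [← hWz, mul_apply_eq_comp, hTz, map_zero]
  exact sub_eq_zero.mp hz0

theorem IsDensityOp.exists_isSelfAdjoint_mul_self_eq {b : HilbertBasis ι ℂ H} {W : H →L[ℂ] H}
    (hW : IsDensityOp b W) :
    ∃ T : H →L[ℂ] H, IsSelfAdjoint T ∧ T * T = W ∧ HasSum (fun i => ‖T (b i)‖ ^ 2) 1 := by
  obtain ⟨hpos, htr⟩ := hW
  have hT : IsSelfAdjoint (CFC.sqrt W) := IsSelfAdjoint.of_nonneg (CFC.sqrt_nonneg W)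
  have hTT : CFC.sqrt W * CFC.sqrt W = W :=
    CFC.sqrt_mul_sqrt_self W ((ContinuousLinearMap.nonneg_iff_isPositive W).mpr hpos)
  refine ⟨CFC.sqrt W, hT, hTT, ?_⟩
  have h := htr.mapL Complex.reCLM
  simp only [Complex.reCLM_apply, Complex.one_re] at h
  refine h.congr_fun fun i => ?_
  rw [hT.norm_sq_apply_eq_re_inner, hTT]
  rfl

end PureStateLimit

theorem stmt16_general {H ι : Type*} [NormedAddCommGroup H] [InnerProductSpace ℂ H] [CompleteSpace H]
    (b : HilbertBasis ι ℂ H)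
    (P : ℕ → H →L[ℂ] H) (hP : ∀ n, P n ∈ projSet H)
    (W₀ : H →L[ℂ] H) (hW₀ : IsDensityOp b W₀)
    (hlim : Tendsto (fun n => traceAlong b (W₀ * P n)) atTop (nhds 1)) :
    ∃ Q ∈ projSet H, Tendsto (fun n => ‖P n - Q‖) atTop (nhds 0) ∧ W₀ = Q := by
  obtain ⟨T, hT, rfl, hb⟩ := hW₀.exists_isSelfAdjoint_mul_self_eq
  choose φ hφ hPφ using hP
  have hTφ : Tendsto (fun n => ‖T (φ n)‖ ^ 2) atTop (𝓝 1) := by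
    refine ((Complex.continuous_re.tendsto 1).comp hlim).congr fun n => ?_
    simp [hPφ, traceAlong_mul_rankOne, hT.norm_sq_apply_eq_re_inner]
  have hbound : Tendsto (fun n => 4 * √(1 - ‖T (φ n)‖ ^ 2)) atTop (𝓝 0) := by
    simpa using ((hTφ.const_sub 1).sqrt).const_mul 4
  have hPW : Tendsto (fun n => ‖P n - T * T‖) atTop (𝓝 0) := by
    refine squeeze_zero (fun n => norm_nonneg _) (fun n => ?_) hbound
    rw [norm_sub_rev, hPφ]
    exact norm_mul_self_sub_rankOne_le hT b hb (hφ n)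
  have hidem : IsIdempotentElem (T * T) := by
    have hPT := tendsto_iff_norm_sub_tendsto_zero.mpr hPW
    refine tendsto_nhds_unique ((hPT.mul hPT).congr fun n => ?_) hPT
    rw [hPφ, rankOne_mul_self (hφ n)]
  obtain ⟨ψ, hψ, hTψ⟩ := exists_mul_self_eq_rankOne hT b hb hidem
  exact ⟨T * T, ⟨ψ, hψ, hTψ⟩, hPW, rfl⟩

theorem stmt16 {H ι : Type*} [NormedAddCommGroup H] [InnerProductSpace ℂ H] [CompleteSpace H]
    [SecondCountableTopology H] (b : HilbertBasis ι ℂ H)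
    (P : ℕ → H →L[ℂ] H) (hP : ∀ n, P n ∈ projSet H)
    (W₀ : H →L[ℂ] H) (hW₀ : IsDensityOp b W₀)
    (hlim : Tendsto (fun n => traceAlong b (W₀ * P n)) atTop (nhds 1)) :
    ∃ Q ∈ projSet H, Tendsto (fun n => ‖P n - Q‖) atTop (nhds 0) ∧ W₀ = Q :=
  stmt16_general b P hP W₀ hW₀ hlim
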